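/- Let v, ρ, p, σ : ℝ² → ℝ be smooth with p never zero, and suppose σ satisfies σ_x = −1/p and σ_t = v/p. Then the pointwise identity D_t(σρ) + D_x(σρv + t) = σ(ρ_t + v ρ_x + ρ v_x) holds. Consequently, on every solution of the Chaplygin gas equations, (σρ, σρv + t) is a conserved vector: D_t(σρ) + D_x(σρv + t) = 0. -/

import Mathlib

noncomputable def Dt (u : ℝ → ℝ → ℝ) : ℝ → ℝ → ℝ := fun t x => deriv (fun s => u s x) t
noncomputable def Dx (u : ℝ → ℝ → ℝ) : ℝ → ℝ → ℝ := fun t x => deriv (fun y => u t y) x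

def Smooth2 (u : ℝ → ℝ → ℝ) : Prop := ContDiff ℝ (⊤ : ℕ∞) (fun p : ℝ × ℝ => u p.1 p.2)

lemma Smooth2.diff_t {u : ℝ → ℝ → ℝ} (h : Smooth2 u) (t x : ℝ) :
    DifferentiableAt ℝ (fun s => u s x) t := by
  have := (h.differentiable (by simp)).comp
    ((differentiable_id.prodMk (differentiable_const x)))
  exact this.differentiableAt

lemma Smooth2.diff_x {u : ℝ → ℝ → ℝ} (h : Smooth2 u) (t x : ℝ) :
    DifferentiableAt ℝ (fun y => u t y) x := by
  have := (h.differentiable (by simp)).comp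
    ((differentiable_const t).prodMk differentiable_id)
  exact this.differentiableAt

theorem chaplygin_nonlocal_conservation_sigma (v ρ p σ : ℝ → ℝ → ℝ)
    (hv : Smooth2 v) (hρ : Smooth2 ρ) (hp : Smooth2 p) (hσ : Smooth2 σ)
    (hp0 : ∀ t x : ℝ, p t x ≠ 0)
    (hσx : ∀ t x : ℝ, Dx σ t x = -(1 / p t x))
    (hσt : ∀ t x : ℝ, Dt σ t x = v t x / p t x) :
    (∀ t x : ℝ,
      Dt (fun t x => σ t x * ρ t x) t x
        + Dx (fun t x => σ t x * ρ t x * v t x + t) t x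
      = σ t x * (Dt ρ t x + v t x * Dx ρ t x + ρ t x * Dx v t x))
    ∧ ((∀ t x : ℝ, Dt v t x + v t x * Dx v t x + Dx p t x / ρ t x = 0) →
       (∀ t x : ℝ, Dt ρ t x + v t x * Dx ρ t x + ρ t x * Dx v t x = 0) →
       (∀ t x : ℝ, Dt p t x + v t x * Dx p t x - p t x * Dx v t x = 0) →
        ∀ t x : ℝ,
          Dt (fun t x => σ t x * ρ t x) t x
            + Dx (fun t x => σ t x * ρ t x * v t x + t) t x = 0) := by
  have key : ∀ t x : ℝ,
      Dt (fun t x => σ t x * ρ t x) t x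
        + Dx (fun t x => σ t x * ρ t x * v t x + t) t x
      = σ t x * (Dt ρ t x + v t x * Dx ρ t x + ρ t x * Dx v t x) := by
    intro t x
    have h1 : Dt (fun t x => σ t x * ρ t x) t x
        = Dt σ t x * ρ t x + σ t x * Dt ρ t x := by
      simp only [Dt]
      exact deriv_mul (hσ.diff_t t x) (hρ.diff_t t x)
    have h2 : Dx (fun t x => σ t x * ρ t x * v t x + t) t x
        = (Dx σ t x * ρ t x + σ t x * Dx ρ t x) * v t x
          + σ t x * ρ t x * Dx v t x := by
      simp only [Dx]
      rw [deriv_fun_add (f := fun y => σ t y * ρ t y * v t y) (((hσ.diff_x t x).mul (hρ.diff_x t x)).mul (hv.diff_x t x))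
        (differentiableAt_const t)]
      rw [deriv_const, add_zero,
        deriv_fun_mul (c := fun y => σ t y * ρ t y) ((hσ.diff_x t x).mul (hρ.diff_x t x)) (hv.diff_x t x),
        deriv_fun_mul (hσ.diff_x t x) (hρ.diff_x t x)]
    rw [h1, h2, hσt, hσx]
    field_simp
    ring
  refine ⟨key, fun _ h2 _ t x => ?_⟩
  rw [key t x, h2 t x, mul_zero]
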